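/- arXiv:1501.01088 — 7 statements merged into one kernel-verified Lean document; each statement's English description precedes it below -/
import Mathlib

section
/- If G is a triangle-free simple graph on n vertices whose minimum degree satisfies δ(G) > 2n/5, then G is bipartite. -/
/-!
If `G` is not bipartite it has an odd closed walk; take a shortest one, `v₀ v₁ … v_{m-1} v₀`.
Triangle-freeness forces `m ≥ 5`. A vertex `u` adjacent to `vᵢ` and `vⱼ` (`i < j`) closes the
two arcs of the walk into closed walks of lengths `j - i + 2` and `m - (j - i) + 2`; one of
them is odd, so minimality gives `j - i ∈ {2, m - 2}`, and for odd `m ≥ 5` no three indices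
have pairwise gaps in this set. Hence every vertex has at most two neighbours on the walk, and
double counting gives `m · δ(G) ≤ ∑ᵢ deg vᵢ ≤ 2n`, i.e. `δ(G) ≤ 2n/5`.
-/

open SimpleGraph

/-- A graph is bipartite if its vertex set can be partitioned into two parts so that
every edge has one endpoint in each part. -/
def IsBipartite {V : Type*} (G : SimpleGraph V) : Prop :=
  ∃ A : Set V, ∀ ⦃v w : V⦄, G.Adj v w → (v ∈ A ↔ w ∉ A)

open Finset

namespace SimpleGraph

variable {V : Type*} {G : SimpleGraph V}

namespace Walk

def IsShortestOddLoop {x : V} (w : G.Walk x x) : Prop :=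
  Odd w.length ∧ ∀ (y : V) (p : G.Walk y y), Odd p.length → w.length ≤ p.length

lemma five_le_length_of_odd (hG : G.CliqueFree 3) {x : V} (w : G.Walk x x)
    (hw : Odd w.length) : 5 ≤ w.length := by
  classical
  have hadj (i : ℕ) (hi : i < w.length) := w.adj_getVert_succ hi
  obtain ⟨k, hk⟩ := hw
  have hend : w.getVert (2 * k + 1) = x := hk ▸ w.getVert_length
  by_contra! h
  obtain rfl | rfl : k = 0 ∨ k = 1 := by omega
  · exact G.loopless.irrefl x (by simpa [hend] using hadj 0 (by omega))
  · have h01 := hadj 0 (by omega)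
    have h23 := hadj 2 (by omega)
    rw [getVert_zero] at h01
    rw [hend] at h23
    exact hG _ (is3Clique_triple_iff.2 ⟨h01, h23.symm, hadj 1 (by omega)⟩)

variable {x : V} {w : G.Walk x x}

lemma IsShortestOddLoop.sub_eq_two_or_eq_length_sub_two (hw : w.IsShortestOddLoop)
    {u : V} {i j : ℕ} (hij : i < j) (hj : j < w.length)
    (hui : G.Adj (w.getVert i) u) (huj : G.Adj (w.getVert j) u) :
    j - i = 2 ∨ j - i = w.length - 2 := by
  have huj' : G.Adj ((w.drop i).getVert (j - i)) u := by
    rwa [drop_getVert, Nat.add_sub_cancel' hij.le]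
  obtain ⟨inner, h_inner⟩ : ∃ p : G.Walk u u, p.length = j - i + 2 :=
    ⟨cons hui.symm (((w.drop i).take (j - i)).concat huj'), by
      simp only [length_cons, length_concat, take_length, drop_length]; omega⟩
  obtain ⟨outer, h_outer⟩ : ∃ p : G.Walk u u, p.length = w.length - j + i + 2 :=
    ⟨cons huj.symm (((w.drop j).append (w.take i)).concat hui), by
      simp only [length_cons, length_concat, length_append, take_length, drop_length]; omega⟩
  have hodd := Nat.odd_iff.1 hw.1
  obtain he | ho := Nat.mod_two_eq_zero_or_one (j - i)
  · have := hw.2 u outer (Nat.odd_iff.2 (by omega))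
    omega
  · have := hw.2 u inner (Nat.odd_iff.2 (by omega))
    omega

lemma IsShortestOddLoop.card_filter_adj_getVert_le_two [DecidableRel G.Adj]
    (hw : w.IsShortestOddLoop) (h5 : 5 ≤ w.length) (u : V) :
    #{i ∈ range w.length | G.Adj (w.getVert i) u} ≤ 2 := by
  set S := {i ∈ range w.length | G.Adj (w.getVert i) u}
  by_contra! hS
  let e : Fin 3 ↪o ℕ := (Fin.castLEOrderEmb hS).trans (S.orderEmbOfFin rfl)
  have mem (k : Fin 3) : e k < w.length ∧ G.Adj (w.getVert (e k)) u := by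
    have := mem_filter.1 (S.orderEmbOfFin_mem rfl (Fin.castLE hS k))
    exact ⟨mem_range.1 this.1, this.2⟩
  have gap {k l : Fin 3} (hkl : k < l) :=
    hw.sub_eq_two_or_eq_length_sub_two (e.strictMono hkl) (mem l).1 (mem k).2 (mem l).2
  have h01 := e.strictMono (show (0 : Fin 3) < 1 by decide)
  have h12 := e.strictMono (show (1 : Fin 3) < 2 by decide)
  have g01 := gap (show (0 : Fin 3) < 1 by decide)
  have g12 := gap (show (1 : Fin 3) < 2 by decide)
  have g02 := gap (show (0 : Fin 3) < 2 by decide)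
  have hodd := Nat.odd_iff.1 hw.1
  omega

lemma IsShortestOddLoop.length_mul_minDegree_le [Fintype V] [DecidableRel G.Adj]
    (hw : w.IsShortestOddLoop) (h5 : 5 ≤ w.length) :
    w.length * G.minDegree ≤ Fintype.card V * 2 := by
  simpa using card_mul_le_card_mul (fun i u ↦ G.Adj (w.getVert i) u)
    (s := range w.length) (t := univ)
    (fun i _ ↦ by simpa [bipartiteAbove, ← neighborFinset_eq_filter] using
      G.minDegree_le_degree _)
    (fun u _ ↦ hw.card_filter_adj_getVert_le_two h5 u)

end Walk

lemma exists_isShortestOddLoop (h : ¬ G.Colorable 2) :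
    ∃ (x : V) (w : G.Walk x x), w.IsShortestOddLoop := by
  classical
  have hodd : ∃ m, ∃ (x : V) (w : G.Walk x x), Odd w.length ∧ w.length = m := by
    simpa [two_colorable_iff_forall_loop_even] using h
  obtain ⟨x, w, hw, hm⟩ := Nat.find_spec hodd
  exact ⟨x, w, hw, fun y p hp ↦ hm ▸ Nat.find_min' hodd ⟨y, p, hp, rfl⟩⟩

end SimpleGraph

theorem IsBipartite.of_colorable_two {V : Type*} {G : SimpleGraph V} (h : G.Colorable 2) :
    _root_.IsBipartite G := by
  obtain ⟨c⟩ := h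
  refine ⟨{v | c v = 0}, fun v w hvw ↦ ?_⟩
  have := c.valid hvw
  show c v = 0 ↔ c w ≠ 0
  omega

theorem stmt_6 (n : ℕ) {V : Type} [Fintype V]
    (G : SimpleGraph V) [DecidableRel G.Adj] (hcard : Fintype.card V = n)
    (htf : G.CliqueFree 3) (hdeg : (2 * n : ℝ) / 5 < G.minDegree) :
    _root_.IsBipartite G := by
  refine IsBipartite.of_colorable_two (by_contra fun h ↦ ?_)
  obtain ⟨x, w, hw⟩ := exists_isShortestOddLoop h
  have h5 := w.five_le_length_of_odd htf hw.1
  have hcount : 5 * G.minDegree ≤ n * 2 :=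
    hcard ▸ (Nat.mul_le_mul_right G.minDegree h5).trans (hw.length_mul_minDegree_le h5)
  have : (5 * G.minDegree : ℝ) ≤ n * 2 := by exact_mod_cast hcount
  linarith
end

section
/- Every triangle-free simple graph H on k vertices has at most e²·(k/(2e))^k Hamiltonian cycles. -/
/-!
Fix a vertex `u`. Read from `u` in its two directions, a Hamiltonian cycle gives two different
lists `y₁, …, y_{k-1}` of the other vertices with `u ~ y₁ ~ ⋯ ~ y_{k-1}`, so twice the number
of cycles is at most the number of such paths. In a triangle-free graph, the next two vertices
`y, z` of a path leaving `x` inside a set of `n` vertices can be chosen in at most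
`a (n - a) ≤ n² / 4` ways, where `a` is the number of neighbours of `x` in the set, because `z`
is not a neighbour of `x`. This leaves at most `t!²` paths when `k = 2t + 1` and at most
`(2t + 1) t!²` when `k = 2t + 2`, and the Stirling-type estimate `t!² e^{2t} ≤ e² t^{2t+1}`,
a consequence of `(1 + 1/n)^{2n+1} ≥ e²`, finishes the proof.
-/

open SimpleGraph

/-- The number of Hamiltonian cycles in a simple graph `H`, counted as distinct
cycle subgraphs passing through all the vertices. -/
noncomputable def hamCycleCount {V : Type*} [DecidableEq V] (H : SimpleGraph V) : ℕ :=
  Nat.card {H' : H.Subgraph //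
    ∃ (u : V) (w : H.Walk u u), w.IsHamiltonianCycle ∧ w.toSubgraph = H'}

open Finset Real
open scoped Nat

lemma exp_one_sq_mul_pow_le (n : ℕ) :
    exp 1 ^ 2 * n ^ (2 * n + 1) ≤ (n + 1 : ℝ) ^ (2 * n + 1) := by
  rcases n.eq_zero_or_pos with rfl | hn
  · simp
  have hn' : (0 : ℝ) < n := by exact_mod_cast hn
  have hlog : (2 : ℝ) / (2 * n + 1) ≤ log (1 + 1 / n) := by
    convert le_log_one_add_of_nonneg (one_div_pos.mpr hn').le using 1
    field_simp
    ring
  have hexp : exp 1 ^ 2 ≤ (1 + 1 / n : ℝ) ^ (2 * n + 1) := by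
    rw [← exp_log (by positivity : (0 : ℝ) < 1 + 1 / n), ← exp_nat_mul, ← exp_nat_mul]
    refine exp_le_exp.mpr ?_
    rw [div_le_iff₀ (by positivity)] at hlog
    push_cast
    linarith
  calc exp 1 ^ 2 * n ^ (2 * n + 1)
      ≤ (1 + 1 / n : ℝ) ^ (2 * n + 1) * n ^ (2 * n + 1) := by gcongr
    _ = (n + 1 : ℝ) ^ (2 * n + 1) := by rw [← mul_pow]; field_simp

lemma factorial_sq_mul_exp_one_pow_le {n : ℕ} (hn : 1 ≤ n) :
    (n ! : ℝ) ^ 2 * exp 1 ^ (2 * n) ≤ exp 1 ^ 2 * n ^ (2 * n + 1) := by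
  induction n, hn using Nat.le_induction with
  | base => simp
  | succ n hn ih =>
    calc ((n + 1)! : ℝ) ^ 2 * exp 1 ^ (2 * (n + 1))
        = (n + 1 : ℝ) ^ 2 * exp 1 ^ 2 * ((n ! : ℝ) ^ 2 * exp 1 ^ (2 * n)) := by
          push_cast [Nat.factorial_succ]; ring
      _ ≤ (n + 1 : ℝ) ^ 2 * (exp 1 ^ 2 * n ^ (2 * n + 1)) * exp 1 ^ 2 := by
          rw [mul_assoc _ (exp 1 ^ 2), mul_comm (exp 1 ^ 2), ← mul_assoc]; gcongr
      _ ≤ (n + 1 : ℝ) ^ 2 * (n + 1 : ℝ) ^ (2 * n + 1) * exp 1 ^ 2 := by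
          gcongr; exact exp_one_sq_mul_pow_le n
      _ = exp 1 ^ 2 * ((n + 1 : ℕ) : ℝ) ^ (2 * (n + 1) + 1) := by push_cast; ring

lemma two_mul_pow_le_pow_succ (n : ℕ) : 2 * (n : ℝ) ^ (n + 1) ≤ (n + 1 : ℝ) ^ (n + 1) := by
  rcases n.eq_zero_or_pos with rfl | hn
  · simp
  have hn' : (0 : ℝ) < n := by exact_mod_cast hn
  have hbern := one_add_mul_le_pow (a := 1 / (n : ℝ)) (by linarith [one_div_pos.mpr hn']) (n + 1)
  calc 2 * (n : ℝ) ^ (n + 1) ≤ (1 + (n + 1 : ℕ) * (1 / n : ℝ)) * n ^ (n + 1) := by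
        gcongr
        rw [Nat.cast_add_one, mul_one_div, add_div, div_self hn'.ne']
        linarith [one_div_pos.mpr hn']
    _ ≤ (1 + 1 / n : ℝ) ^ (n + 1) * n ^ (n + 1) := by gcongr
    _ = (n + 1 : ℝ) ^ (n + 1) := by rw [← mul_pow]; field_simp

lemma factorial_sq_div_two_le (t : ℕ) :
    (t ! : ℝ) ^ 2 / 2 ≤ exp 1 ^ 2 * ((2 * t + 1 : ℝ) / (2 * exp 1)) ^ (2 * t + 1) := by
  rcases t.eq_zero_or_pos with rfl | ht
  · norm_num
    field_simp
    exact exp_le_exp.mpr one_le_two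
  have hfact := factorial_sq_mul_exp_one_pow_le ht
  have hbern := two_mul_pow_le_pow_succ (2 * t)
  have he4 : exp 1 ≤ 4 := by linarith [exp_one_lt_d9]
  rw [div_pow, mul_pow, ← mul_div_assoc, le_div_iff₀ (by positivity)]
  push_cast at hbern
  calc (t ! : ℝ) ^ 2 / 2 * (2 ^ (2 * t + 1) * exp 1 ^ (2 * t + 1))
      = ((t ! : ℝ) ^ 2 * exp 1 ^ (2 * t)) * exp 1 * 2 ^ (2 * t) := by ring
    _ ≤ exp 1 ^ 2 * t ^ (2 * t + 1) * exp 1 * 2 ^ (2 * t) := by gcongr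
    _ = exp 1 ^ 2 * (exp 1 / 4) * (2 * (2 * t : ℝ) ^ (2 * t + 1)) := by ring
    _ ≤ exp 1 ^ 2 * 1 * (2 * t + 1 : ℝ) ^ (2 * t + 1) := by
        gcongr
        linarith
    _ = _ := by ring

lemma mul_factorial_sq_div_two_le (t : ℕ) :
    (2 * t + 1 : ℝ) * (t ! : ℝ) ^ 2 / 2 ≤
      exp 1 ^ 2 * ((2 * t + 2 : ℝ) / (2 * exp 1)) ^ (2 * t + 2) := by
  have hrhs : exp 1 ^ 2 * ((2 * t + 2 : ℝ) / (2 * exp 1)) ^ (2 * t + 2)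
      = (t + 1 : ℝ) ^ (2 * t + 2) / exp 1 ^ (2 * t) := by
    rw [show (2 * t + 2 : ℝ) / (2 * exp 1) = (t + 1) / exp 1 by field_simp, div_pow]
    field_simp
    ring
  rw [hrhs, le_div_iff₀ (by positivity)]
  rcases t.eq_zero_or_pos with rfl | ht
  · norm_num
  have hfact := factorial_sq_mul_exp_one_pow_le ht
  calc (2 * t + 1 : ℝ) * (t ! : ℝ) ^ 2 / 2 * exp 1 ^ (2 * t)
      = (2 * t + 1 : ℝ) / 2 * ((t ! : ℝ) ^ 2 * exp 1 ^ (2 * t)) := by ring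
    _ ≤ (t + 1 : ℝ) * (exp 1 ^ 2 * t ^ (2 * t + 1)) := by gcongr; linarith
    _ ≤ (t + 1 : ℝ) * (t + 1 : ℝ) ^ (2 * t + 1) := by gcongr; exact exp_one_sq_mul_pow_le t
    _ = (t + 1 : ℝ) ^ (2 * t + 2) := by ring

noncomputable def chainBound : ℕ → ℕ → ℝ
  | 0, _ => 1
  | 1, n => n
  | m + 2, n => n ^ 2 / 4 * chainBound m (n - 2)

lemma chainBound_nonneg : ∀ m n, 0 ≤ chainBound m n
  | 0, _ => zero_le_one
  | 1, _ => Nat.cast_nonneg _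
  | m + 2, n => mul_nonneg (by positivity) (chainBound_nonneg m (n - 2))

lemma chainBound_two_mul_self (t : ℕ) : chainBound (2 * t) (2 * t) = (t ! : ℝ) ^ 2 := by
  induction t with
  | zero => simp [chainBound]
  | succ t ih =>
    rw [show 2 * (t + 1) = 2 * t + 2 by ring, chainBound, Nat.add_sub_cancel, ih,
      Nat.factorial_succ]
    push_cast
    ring

lemma chainBound_two_mul_add_one_self_le (t : ℕ) :
    chainBound (2 * t + 1) (2 * t + 1) ≤ (2 * t + 1) * (t ! : ℝ) ^ 2 := by
  induction t with
  | zero => simp [chainBound]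
  | succ t ih =>
    rw [show 2 * (t + 1) + 1 = 2 * t + 1 + 2 by ring, chainBound, Nat.add_sub_cancel,
      Nat.factorial_succ]
    push_cast
    calc ((2 * t + 1 + 2 : ℝ)) ^ 2 / 4 * chainBound (2 * t + 1) (2 * t + 1)
        ≤ (2 * t + 3 : ℝ) ^ 2 / 4 * ((2 * t + 1) * (t ! : ℝ) ^ 2) := by
          rw [show (2 * t + 1 + 2 : ℝ) = 2 * t + 3 by ring]; gcongr
      _ ≤ (2 * (t + 1) + 1 : ℝ) * ((t + 1) * t !) ^ 2 := by
          have : (0 : ℝ) ≤ (t ! : ℝ) ^ 2 := by positivity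
          nlinarith

lemma chainBound_pred_self_div_two_le (k : ℕ) :
    chainBound (k - 1) (k - 1) / 2 ≤ exp 1 ^ 2 * ((k : ℝ) / (2 * exp 1)) ^ k := by
  obtain ⟨t, rfl | rfl⟩ := Nat.even_or_odd' k
  · rcases t with _ | t
    · have : 1 ≤ exp 1 := one_le_exp zero_le_one
      simp only [Nat.mul_zero, Nat.zero_sub, chainBound, Nat.cast_zero, pow_zero, mul_one]
      nlinarith
    rw [show 2 * (t + 1) - 1 = 2 * t + 1 by omega]
    calc chainBound (2 * t + 1) (2 * t + 1) / 2 ≤ (2 * t + 1) * (t ! : ℝ) ^ 2 / 2 := by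
          gcongr; exact chainBound_two_mul_add_one_self_le t
      _ ≤ exp 1 ^ 2 * ((2 * t + 2 : ℝ) / (2 * exp 1)) ^ (2 * t + 2) :=
          mul_factorial_sq_div_two_le t
      _ = _ := by push_cast; ring_nf
  · rw [Nat.add_sub_cancel, chainBound_two_mul_self]
    exact_mod_cast factorial_sq_div_two_le t

namespace SimpleGraph

variable {V : Type*} {G : SimpleGraph V}

namespace Walk

variable {u : V}

lemma support_eq_cons_dropLast_tail_append {w : G.Walk u u} (hw : ¬w.Nil) :
    w.support = u :: (w.support.tail.dropLast ++ [u]) := by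
  have hne : w.support.tail ≠ [] := by
    rw [← support_tail_of_not_nil w hw]; exact support_ne_nil _
  have hlast : w.support.tail.getLast hne = u := by rw [List.getLast_tail]; exact w.getLast_support
  calc w.support = u :: w.support.tail := (cons_tail_support w).symm
    _ = u :: (w.support.tail.dropLast ++ [w.support.tail.getLast hne]) := by
      rw [List.dropLast_append_getLast]
    _ = u :: (w.support.tail.dropLast ++ [u]) := by rw [hlast]

lemma eq_of_dropLast_tail_support_eq {w w' : G.Walk u u} (hw : ¬w.Nil) (hw' : ¬w'.Nil)
    (h : w.support.tail.dropLast = w'.support.tail.dropLast) : w = w' :=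
  ext_support <| by
    rw [support_eq_cons_dropLast_tail_append hw, support_eq_cons_dropLast_tail_append hw', h]

lemma IsCycle.reverse_ne {w : G.Walk u u} (hw : w.IsCycle) : w.reverse ≠ w :=
  fun h => hw.snd_ne_penultimate (by rw [← snd_reverse, h])

lemma IsHamiltonianCycle.reverse [Fintype V] [DecidableEq V] {w : G.Walk u u}
    (hw : w.IsHamiltonianCycle) : w.reverse.IsHamiltonianCycle :=
  isHamiltonianCycle_iff_isCycle_and_length_eq.mpr
    ⟨hw.isCycle.reverse, by rw [length_reverse, hw.length_eq]⟩

end Walk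

variable [DecidableEq V]

section Chains

variable (G) [DecidableRel G.Adj]

def chainsFrom : ℕ → V → Finset V → Finset (List V)
  | 0, _, _ => {[]}
  | m + 1, x, s =>
    {y ∈ s | G.Adj x y}.biUnion fun y => (chainsFrom m y (s.erase y)).image (y :: ·)

variable {G}

lemma mem_chainsFrom {q : List V} {x : V} {s : Finset V} (hchain : (x :: q).IsChain G.Adj)
    (hnodup : q.Nodup) (hs : ∀ a ∈ q, a ∈ s) : q ∈ G.chainsFrom q.length x s := by
  induction q generalizing x s with
  | nil => simp [chainsFrom]
  | cons y q ih =>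
    rw [List.isChain_cons_cons] at hchain
    rw [List.nodup_cons] at hnodup
    simp only [List.length_cons, chainsFrom, mem_biUnion, mem_filter, mem_image]
    refine ⟨y, ⟨hs y List.mem_cons_self, hchain.1⟩, q,
      ih hchain.2 hnodup.2 fun a ha => ?_, rfl⟩
    exact mem_erase.mpr ⟨fun h => hnodup.1 (h ▸ ha), hs a (List.mem_cons_of_mem y ha)⟩

lemma card_chainsFrom_succ_le (m : ℕ) (x : V) (s : Finset V) :
    #(G.chainsFrom (m + 1) x s) ≤ ∑ y ∈ s with G.Adj x y, #(G.chainsFrom m y (s.erase y)) :=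
  card_biUnion_le.trans <| sum_le_sum fun _ _ => card_image_le

lemma filter_adj_subset_sdiff (hG : G.CliqueFree 3) {x y : V} {s : Finset V} (hxy : G.Adj x y) :
    {z ∈ s.erase y | G.Adj y z} ⊆ s \ {z ∈ s | G.Adj x z} := by
  intro z hz
  simp only [mem_filter, mem_erase, mem_sdiff] at hz ⊢
  exact ⟨hz.1.2, fun hxz => hG {x, y, z} (is3Clique_triple_iff.mpr ⟨hxy, hxz.2, hz.2⟩)⟩

lemma sum_card_filter_adj_le (hG : G.CliqueFree 3) (x : V) (s : Finset V) :
    (∑ y ∈ s with G.Adj x y, #{z ∈ s.erase y | G.Adj y z} : ℝ) ≤ #s ^ 2 / 4 := by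
  set A := {y ∈ s | G.Adj x y}
  have hA : #A ≤ #s := card_filter_le s _
  have hterm : ∀ y ∈ A, (#{z ∈ s.erase y | G.Adj y z} : ℝ) ≤ #s - #A := fun y hy => by
    rw [← Nat.cast_sub hA, ← card_sdiff_of_subset (filter_subset _ _), Nat.cast_le]
    exact card_le_card (filter_adj_subset_sdiff hG (mem_filter.mp hy).2)
  calc (∑ y ∈ A, #{z ∈ s.erase y | G.Adj y z} : ℝ)
      ≤ ∑ y ∈ A, ((#s : ℝ) - #A) := sum_le_sum hterm
    _ = #A * (#s - #A) := by rw [sum_const, nsmul_eq_mul]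
    _ ≤ #s ^ 2 / 4 := by nlinarith [sq_nonneg ((#s : ℝ) - 2 * #A)]

lemma card_chainsFrom_le (hG : G.CliqueFree 3) :
    ∀ (m : ℕ) (x : V) (s : Finset V), (#(G.chainsFrom m x s) : ℝ) ≤ chainBound m #s
  | 0, x, s => by simp [chainsFrom, chainBound]
  | 1, x, s => by
    have h := card_chainsFrom_succ_le (G := G) 0 x s
    simp only [chainsFrom.eq_1, card_singleton, sum_const, smul_eq_mul, mul_one] at h
    rw [chainBound]
    exact_mod_cast h.trans (card_filter_le s _)
  | m + 2, x, s => by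
    have hrest : ∀ y ∈ s, ∀ z ∈ s.erase y,
        (#(G.chainsFrom m z ((s.erase y).erase z)) : ℝ) ≤ chainBound m (#s - 2) := by
      intro y hy z hz
      have hcard : #((s.erase y).erase z) = #s - 2 := by
        rw [card_erase_of_mem hz, card_erase_of_mem hy]; omega
      exact hcard ▸ card_chainsFrom_le hG m z _
    calc (#(G.chainsFrom (m + 2) x s) : ℝ)
        ≤ ∑ y ∈ s with G.Adj x y, ∑ z ∈ s.erase y with G.Adj y z,
            (#(G.chainsFrom m z ((s.erase y).erase z)) : ℝ) := by
          exact_mod_cast (card_chainsFrom_succ_le (m + 1) x s).trans <|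
            sum_le_sum fun y _ => card_chainsFrom_succ_le m y (s.erase y)
      _ ≤ ∑ y ∈ s with G.Adj x y, ∑ z ∈ s.erase y with G.Adj y z, chainBound m (#s - 2) :=
          sum_le_sum fun y hy => sum_le_sum fun z hz =>
            hrest y (mem_filter.mp hy).1 z (mem_filter.mp hz).1
      _ = (∑ y ∈ s with G.Adj x y, #{z ∈ s.erase y | G.Adj y z} : ℝ) *
            chainBound m (#s - 2) := by
          simp only [sum_const, nsmul_eq_mul, sum_mul]
      _ ≤ #s ^ 2 / 4 * chainBound m (#s - 2) :=
          mul_le_mul_of_nonneg_right (sum_card_filter_adj_le hG x s) (chainBound_nonneg _ _)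
      _ = chainBound (m + 2) #s := rfl

lemma Walk.IsHamiltonianCycle.dropLast_tail_support_mem_chainsFrom [Fintype V] {u : V}
    {w : G.Walk u u} (hw : w.IsHamiltonianCycle) :
    w.support.tail.dropLast ∈ G.chainsFrom (Fintype.card V - 1) u (univ.erase u) := by
  have hsupp := support_eq_cons_dropLast_tail_append hw.not_nil
  have hnodup : (w.support.tail.dropLast ++ [u]).Nodup := by
    have := hw.isCycle.support_nodup
    rwa [hsupp, List.tail_cons] at this
  have hlength : w.support.tail.dropLast.length = Fintype.card V - 1 := by
    have := congrArg List.length hsupp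
    simp only [length_support, hw.length_eq, List.length_cons, List.length_append,
      List.length_nil] at this
    omega
  rw [← hlength]
  refine mem_chainsFrom ?_ (hnodup.sublist (List.sublist_append_left _ _)) fun a ha => ?_
  · exact w.isChain_adj_support.prefix (hsupp ▸ ⟨[u], by simp⟩)
  · refine mem_erase.mpr ⟨fun h => ?_, mem_univ a⟩
    exact List.disjoint_of_nodup_append hnodup ha (h ▸ List.mem_singleton_self a)

lemma two_mul_hamCycleCount_le [Fintype V] (u : V) :
    2 * hamCycleCount G ≤ #(G.chainsFrom (Fintype.card V - 1) u (univ.erase u)) := by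
  set Cyc := {H' : G.Subgraph //
    ∃ (v : V) (w : G.Walk v v), w.IsHamiltonianCycle ∧ w.toSubgraph = H'}
  have hbase : ∀ p : Cyc, ∃ w : G.Walk u u, w.IsHamiltonianCycle ∧ w.toSubgraph = p.1 := by
    rintro ⟨_, v, w, hw, rfl⟩
    exact ⟨w.rotate u (hw.mem_support u), hw.rotate _, Walk.toSubgraph_rotate _ _⟩
  choose W hW hWsub using hbase
  let orient : Cyc × Bool → G.Walk u u := fun pb => bif pb.2 then W pb.1 else (W pb.1).reverse
  have horient : ∀ pb, (orient pb).IsHamiltonianCycle ∧ (orient pb).toSubgraph = pb.1.1 := by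
    rintro ⟨p, _ | _⟩
    · exact ⟨(hW p).reverse, (Walk.toSubgraph_reverse _).trans (hWsub p)⟩
    · exact ⟨hW p, hWsub p⟩
  have horient_inj : Function.Injective orient := by
    rintro ⟨p, b⟩ ⟨p', b'⟩ h
    obtain rfl : p = p' := Subtype.ext <| (horient (p, b)).2.symm.trans (h ▸ (horient (p', b')).2)
    cases b <;> cases b'
    · rfl
    · exact absurd h (hW p).isCycle.reverse_ne
    · exact absurd h.symm (hW p).isCycle.reverse_ne
    · rfl
  let code : Cyc × Bool → G.chainsFrom (Fintype.card V - 1) u (univ.erase u) := fun pb =>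
    ⟨_, (horient pb).1.dropLast_tail_support_mem_chainsFrom⟩
  have hcode_inj : Function.Injective code := fun pb pb' h =>
    horient_inj <| Walk.eq_of_dropLast_tail_support_eq (horient pb).1.not_nil
      (horient pb').1.not_nil (congrArg Subtype.val h)
  have hcard := Nat.card_le_card_of_injective code hcode_inj
  rw [Nat.card_prod, Nat.card_eq_fintype_card (α := Bool), Fintype.card_bool,
    Nat.card_eq_finsetCard] at hcard
  exact (mul_comm _ _).trans_le hcard

end Chains

theorem hamCycleCount_le_chainBound [Fintype V] (hG : G.CliqueFree 3) :
    (hamCycleCount G : ℝ) ≤ chainBound (Fintype.card V - 1) (Fintype.card V - 1) / 2 := by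
  classical
  rcases isEmpty_or_nonempty V with hV | ⟨⟨u⟩⟩
  · simp [hamCycleCount, chainBound]
  have hcount := two_mul_hamCycleCount_le (G := G) u
  have hchains := card_chainsFrom_le hG (Fintype.card V - 1) u (univ.erase u)
  rw [card_erase_of_mem (mem_univ u), card_univ] at hchains
  rw [le_div_iff₀ two_pos]
  calc (hamCycleCount G : ℝ) * 2 = (2 * hamCycleCount G : ℕ) := by push_cast; ring
    _ ≤ _ := (Nat.cast_le.mpr hcount).trans hchains

end SimpleGraph

theorem stmt_10 (k : ℕ) {V : Type} [Fintype V] [DecidableEq V] (H : SimpleGraph V)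
    (hcard : Fintype.card V = k) (htf : H.CliqueFree 3) :
    (hamCycleCount H : ℝ) ≤ Real.exp 1 ^ 2 * ((k : ℝ) / (2 * Real.exp 1)) ^ k := by
  subst hcard
  exact (hamCycleCount_le_chainBound htf).trans (chainBound_pred_self_div_two_le _)
end

section
/- For every integer ℓ ≥ 6, the quantity a_ℓ = Σ_{i=0}^{ℓ−2} ℓ/((ℓ−i)·(i!)²) satisfies a_{ℓ+1} ≤ a_ℓ; that is, the sequence (a_ℓ)_{ℓ≥6} is non-increasing. -/
theorem stmt_12 (ℓ : ℕ) (hℓ : 6 ≤ ℓ) :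
    ∑ i ∈ Finset.range ((ℓ + 1) - 1), ((ℓ + 1 : ℕ) : ℝ) / (((ℓ + 1 : ℕ) - i) * (i.factorial : ℝ) ^ 2) ≤
      ∑ i ∈ Finset.range (ℓ - 1), (ℓ : ℝ) / (((ℓ : ℝ) - i) * (i.factorial : ℝ) ^ 2) := by
  obtain ⟨m, rfl⟩ := Nat.exists_eq_add_of_le hℓ
  have h1 : (6 + m + 1) - 1 = (4 + m) + 1 + 1 := by omega
  have h2 : (6 + m) - 1 = (4 + m) + 1 := by omega
  rw [h1, h2, Finset.sum_range_succ, Finset.sum_range_succ, Finset.sum_range_succ]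
  have hstep : ∀ i ∈ Finset.range (4 + m),
      ((6 + m + 1 : ℕ) : ℝ) / ((((6 + m + 1 : ℕ) : ℝ) - i) * (i.factorial : ℝ) ^ 2) ≤
      ((6 + m : ℕ) : ℝ) / ((((6 + m : ℕ) : ℝ) - i) * (i.factorial : ℝ) ^ 2) := by
    intro i hi
    have hi' : i < 4 + m := Finset.mem_range.mp hi
    have hif : (0:ℝ) < (i.factorial : ℝ) ^ 2 := by positivity
    have hic : (i:ℝ) ≤ 3 + m := by exact_mod_cast Nat.lt_succ_iff.mp (by omega)
    have hin : (0:ℝ) ≤ (i:ℝ) := Nat.cast_nonneg i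
    have hd1 : (0:ℝ) < ((6 + m + 1 : ℕ) : ℝ) - i := by push_cast; linarith
    have hd2 : (0:ℝ) < ((6 + m : ℕ) : ℝ) - i := by push_cast; linarith
    rw [div_le_div_iff₀ (by positivity) (by positivity)]
    push_cast
    nlinarith [mul_nonneg (le_of_lt hif) hin]
  have hmain := Finset.sum_le_sum hstep
  have hlast : ((6 + m + 1 : ℕ) : ℝ) / ((((6 + m + 1 : ℕ) : ℝ) - (4 + m : ℕ)) * ((4 + m : ℕ).factorial : ℝ) ^ 2)
      + ((6 + m + 1 : ℕ) : ℝ) / ((((6 + m + 1 : ℕ) : ℝ) - ((4 + m : ℕ) + 1)) * (((4 + m : ℕ) + 1).factorial : ℝ) ^ 2)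
      ≤ ((6 + m : ℕ) : ℝ) / ((((6 + m : ℕ) : ℝ) - (4 + m : ℕ)) * ((4 + m : ℕ).factorial : ℝ) ^ 2) := by
    have hfs : ((4 + m + 1).factorial : ℝ) = (5 + (m:ℝ)) * ((4 + m).factorial : ℝ) := by
      rw [show 4 + m + 1 = (4 + m) + 1 from rfl, Nat.factorial_succ]
      push_cast; ring
    have hF : (0:ℝ) < ((4 + m).factorial : ℝ) := by positivity
    push_cast [hfs]
    have e1 : (6 + (m:ℝ) + 1) - (4 + m) = 3 := by ring
    have e2 : (6 + (m:ℝ)) - (4 + m) = 2 := by ring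
    have e3 : (6 + (m:ℝ) + 1) - (4 + m + 1) = 2 := by ring
    rw [e1, e2, e3]
    have hm : (0:ℝ) ≤ (m:ℝ) := Nat.cast_nonneg m
    rw [div_add_div _ _ (by positivity) (by positivity), div_le_div_iff₀ (by positivity) (by positivity)]
    nlinarith [sq_nonneg ((4+m).factorial : ℝ), mul_pos hF hF, sq_nonneg (m:ℝ),
      mul_nonneg (mul_nonneg hm hm) (mul_nonneg hF.le hF.le),
      mul_nonneg hm (mul_nonneg hF.le hF.le)]
  push_cast at hmain hlast ⊢
  linarith
end

section
/- For every integer ℓ ≥ 4, the quantity a_ℓ = Σ_{i=0}^{ℓ−2} ℓ/((ℓ−i)·i!·(i+1)!) satisfies a_{ℓ+1} ≤ a_ℓ; that is, the sequence (a_ℓ)_{ℓ≥4} is non-increasing. -/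
lemma fact_ge (n : ℕ) (h : 3 ≤ n) : n + 2 ≤ n.factorial := by
  induction n with
  | zero => omega
  | succ k ih =>
    rcases Nat.lt_or_ge k 3 with hk | hk
    · interval_cases k <;> simp [Nat.factorial] <;> omega
    · have := ih hk
      have hkpos : 1 ≤ k.factorial := Nat.one_le_iff_ne_zero.mpr (Nat.factorial_ne_zero k)
      rw [Nat.factorial_succ]
      nlinarith

lemma key_nat (m : ℕ) : (m+5)*(m+4)*(m+3) ≤ (m+3).factorial * (m+4).factorial := by
  have h1 : m + 5 ≤ (m+3).factorial := fact_ge (m+3) (by omega)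
  have h2 : (m+4)*(m+3) ≤ (m+4).factorial := by
    have e1 : (m+4).factorial = (m+4) * ((m+3) * (m+2).factorial) := by
      rw [Nat.factorial_succ (m+3), Nat.factorial_succ (m+2)]
    have : 1 ≤ (m+2).factorial := Nat.one_le_iff_ne_zero.mpr (Nat.factorial_ne_zero _)
    nlinarith
  calc (m+5)*(m+4)*(m+3) = (m+5)*((m+4)*(m+3)) := by ring
    _ ≤ (m+3).factorial * (m+4).factorial := Nat.mul_le_mul h1 h2

theorem stmt_14 (ℓ : ℕ) (hℓ : 4 ≤ ℓ) :
    ∑ i ∈ Finset.range ((ℓ + 1) - 1),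
        ((ℓ + 1 : ℕ) : ℝ) / (((ℓ + 1 : ℕ) - i) * (i.factorial : ℝ) * ((i + 1).factorial : ℝ)) ≤
      ∑ i ∈ Finset.range (ℓ - 1),
        (ℓ : ℝ) / (((ℓ : ℝ) - i) * (i.factorial : ℝ) * ((i + 1).factorial : ℝ)) := by
  obtain ⟨m, rfl⟩ : ∃ m, ℓ = m + 4 := ⟨ℓ - 4, by omega⟩
  have h1 : (m + 4 + 1) - 1 = (m + 3) + 1 := by omega
  have h2 : m + 4 - 1 = m + 3 := by omega
  rw [h1, h2, Finset.sum_range_succ]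
  have h1mem : (1:ℕ) ∈ Finset.range (m+3) := by simp
  rw [← Finset.sum_erase_add _ _ h1mem, ← Finset.sum_erase_add _ _ h1mem]
  have hsum : ∑ i ∈ (Finset.range (m+3)).erase 1,
      ((m + 4 + 1 : ℕ) : ℝ) / (((m + 4 + 1 : ℕ) - i) * (i.factorial : ℝ) * ((i + 1).factorial : ℝ)) ≤
      ∑ i ∈ (Finset.range (m+3)).erase 1,
      ((m + 4 : ℕ) : ℝ) / ((((m + 4 : ℕ) : ℝ) - i) * (i.factorial : ℝ) * ((i + 1).factorial : ℝ)) := by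
    apply Finset.sum_le_sum
    intro i hi
    have hi2 : i < m + 3 := Finset.mem_range.mp (Finset.mem_of_mem_erase hi)
    have hile : (i:ℝ) ≤ m + 2 := by exact_mod_cast Nat.le_of_lt_succ hi2
    have hF : (0:ℝ) < (i.factorial : ℝ) * ((i + 1).factorial : ℝ) := by positivity
    push_cast
    have hA : (0:ℝ) < (m:ℝ) + 4 + 1 - i := by linarith
    have hB : (0:ℝ) < (m:ℝ) + 4 - i := by linarith
    rw [mul_assoc, mul_assoc, div_le_div_iff₀ (by positivity) (by positivity)]
    have hi0 : (0:ℝ) ≤ (i:ℝ) := Nat.cast_nonneg i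
    nlinarith [hF, hi0]
  rw [add_assoc]
  refine add_le_add hsum ?_
  have e2 : (1:ℕ) + 1 = 2 := rfl
  simp only [e2, Nat.factorial_one, Nat.factorial_two]
  push_cast
  have h4 : m + 3 + 1 = m + 4 := by omega
  have hAB : ((m:ℝ)+5)*((m:ℝ)+4)*((m:ℝ)+3) ≤ ((m+3).factorial:ℝ) * ((m+3+1).factorial:ℝ) := by
    rw [h4]; exact_mod_cast key_nat m
  have hA : (0:ℝ) < ((m+3).factorial:ℝ) := by positivity
  have hB : (0:ℝ) < ((m+3+1).factorial:ℝ) := by positivity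
  have e3 : (m:ℝ) + 4 + 1 - ((m:ℝ)+3) = 2 := by ring
  rw [e3]
  have hm0 : (0:ℝ) ≤ (m:ℝ) := Nat.cast_nonneg m
  have hm3 : ((m:ℝ) + 4 + 1 - 1) ≠ 0 := ne_of_gt (by linarith)
  have hm4 : ((m:ℝ) + 4 - 1) ≠ 0 := ne_of_gt (by linarith)
  have step1 : ((m:ℝ) + 4) / (((m:ℝ) + 4 - 1) * 1 * 2) - ((m:ℝ) + 4 + 1) / (((m:ℝ) + 4 + 1 - 1) * 1 * 2)
      = 1/(2*((m:ℝ)+4)*((m:ℝ)+3)) := by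
    field_simp
    ring
  have step2 : ((m:ℝ) + 4 + 1) / (2 * ((m+3).factorial:ℝ) * ((m+3+1).factorial:ℝ))
      ≤ 1/(2*((m:ℝ)+4)*((m:ℝ)+3)) := by
    rw [div_le_div_iff₀ (by positivity) (by positivity)]
    nlinarith [hAB]
  linarith [step1, step2]
end

section
/- For every integer ℓ ≥ 4, the quantity c_ℓ = Σ_{i=0}^{ℓ−2} i/((ℓ−i)·(i!)²) satisfies c_ℓ ≤ 3/(ℓ−3) + e/ℓ; in particular, c_ℓ → 0 as ℓ → ∞. -/
theorem term_bd (ℓ k : ℕ) (hk : k + 5 ≤ ℓ) :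
    ((3+k : ℕ) : ℝ) / (((ℓ : ℝ) - (3+k : ℕ)) * (((3+k : ℕ).factorial : ℝ)) ^ 2)
      ≤ 1 / ((ℓ : ℝ) * ((k+1).factorial : ℝ)) := by
  have hf : (3+k).factorial = (k+3)*((k+2)*((k+1)*k.factorial)) := by
    rw [show 3+k = k+3 by omega]; rfl
  have hf1 : (k+1).factorial = (k+1)*k.factorial := rfl
  have hF : (1:ℝ) ≤ (k.factorial : ℝ) := by exact_mod_cast k.factorial_pos
  have hL : (k:ℝ) + 5 ≤ (ℓ:ℝ) := by exact_mod_cast hk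
  have hK : (0:ℝ) ≤ (k:ℝ) := Nat.cast_nonneg k
  set K := (k:ℝ)
  set L := (ℓ:ℝ)
  set F := (k.factorial : ℝ)
  have hsub : (0:ℝ) < L - (3+K) := by linarith
  rw [hf, hf1]
  push_cast
  rw [div_le_div_iff₀ (by positivity) (mul_pos (by linarith) (by positivity))]
  set A := (K+1)*F with hAdef
  have hA : (1:ℝ) ≤ A := by nlinarith
  have hApos : (0:ℝ) < A := by linarith
  have h2 : (2:ℝ) ≤ L - K - 3 := by linarith
  have key : L ≤ (L-K-3)*((K+3)*(K+2)^2) := by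
    nlinarith [mul_nonneg (sub_nonneg.mpr h2)
      (show (0:ℝ) ≤ (K+3)*(K+2)^2 - 1 by nlinarith [sq_nonneg (K+2)]), sq_nonneg (K+2)]
  have step1 : (3+K)*(L*A) ≤ (3+K)*A*((L-K-3)*((K+3)*(K+2)^2)) := by
    nlinarith [mul_le_mul_of_nonneg_left key (show (0:ℝ) ≤ (3+K)*A by positivity)]
  have step2 : (3+K)*A*((L-K-3)*((K+3)*(K+2)^2)) ≤ (L-(3+K))*((K+3)*((K+2)*A))^2 := by
    nlinarith [mul_le_mul_of_nonneg_left hA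
      (show (0:ℝ) ≤ (L-K-3)*((K+3)^2*(K+2)^2*A) by positivity)]
  calc (3+K)*(L*((K+1)*F)) = (3+K)*(L*A) := by rw [hAdef]
    _ ≤ (L-(3+K))*((K+3)*((K+2)*A))^2 := le_trans step1 step2
    _ = 1*((L-(3+K))*((K+3)*((K+2)*((K+1)*F)))^2) := by rw [hAdef]; ring

theorem main_bd (ℓ : ℕ) (hℓ : 4 ≤ ℓ) :
    ∑ i ∈ Finset.range (ℓ - 1), (i : ℝ) / (((ℓ : ℝ) - i) * (i.factorial : ℝ) ^ 2) ≤
      3 / ((ℓ : ℝ) - 3) + Real.exp 1 / ℓ := by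
  have hL : (4:ℝ) ≤ (ℓ:ℝ) := by exact_mod_cast hℓ
  have h3 : 3 ≤ ℓ - 1 := by omega
  rw [Finset.range_eq_Ico, ← Finset.sum_Ico_consecutive _ (Nat.zero_le 3) h3]
  have h1 : ∑ i ∈ Finset.Ico (0:ℕ) 3, (i : ℝ) / (((ℓ : ℝ) - i) * (i.factorial : ℝ) ^ 2)
      ≤ 3 / ((ℓ : ℝ) - 3) := by
    rw [show Finset.Ico (0:ℕ) 3 = Finset.range 3 from rfl]
    rw [Finset.sum_range_succ, Finset.sum_range_succ, Finset.sum_range_succ, Finset.sum_range_zero]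
    norm_num [Nat.factorial]
    rw [inv_eq_one_div,
      div_add_div _ _ (by linarith : (ℓ:ℝ)-1 ≠ 0) (by nlinarith : ((ℓ:ℝ)-2)*4 ≠ 0),
      div_le_div_iff₀ (by nlinarith) (by linarith)]
    nlinarith
  have h2 : ∑ i ∈ Finset.Ico 3 (ℓ-1), (i : ℝ) / (((ℓ : ℝ) - i) * (i.factorial : ℝ) ^ 2)
      ≤ Real.exp 1 / ℓ := by
    rw [Finset.sum_Ico_eq_sum_range]
    have hLpos : (0:ℝ) < (ℓ:ℝ) := by linarith
    calc ∑ k ∈ Finset.range (ℓ-1-3), ((3+k : ℕ) : ℝ) /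
          (((ℓ : ℝ) - (3+k : ℕ)) * (((3+k : ℕ).factorial : ℝ)) ^ 2)
        ≤ ∑ k ∈ Finset.range (ℓ-1-3), 1 / ((ℓ : ℝ) * ((k+1).factorial : ℝ)) := by
          apply Finset.sum_le_sum
          intro k hk
          exact term_bd ℓ k (by simp only [Finset.mem_range] at hk; omega)
      _ = (1/(ℓ:ℝ)) * ∑ k ∈ Finset.range (ℓ-1-3), 1 / (((k+1).factorial : ℝ)) := by
          rw [Finset.mul_sum]
          apply Finset.sum_congr rfl
          intro k _
          field_simp
      _ ≤ (1/(ℓ:ℝ)) * ∑ k ∈ Finset.range (ℓ-1-3), 1 / ((k.factorial : ℝ)) := by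
          apply mul_le_mul_of_nonneg_left _ (by positivity)
          apply Finset.sum_le_sum
          intro k _
          apply div_le_div_of_nonneg_left one_pos.le (by positivity)
          exact_mod_cast Nat.factorial_le (Nat.le_succ k)
      _ ≤ (1/(ℓ:ℝ)) * Real.exp 1 := by
          apply mul_le_mul_of_nonneg_left _ (by positivity)
          have h := Real.sum_le_exp_of_nonneg (by norm_num : (0:ℝ) ≤ 1) (ℓ-1-3)
          simpa using h
      _ = Real.exp 1 / ℓ := by ring
  linarith

theorem stmt_16 :
    (∀ ℓ : ℕ, 4 ≤ ℓ →
      ∑ i ∈ Finset.range (ℓ - 1), (i : ℝ) / (((ℓ : ℝ) - i) * (i.factorial : ℝ) ^ 2) ≤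
        3 / ((ℓ : ℝ) - 3) + Real.exp 1 / ℓ) ∧
    Filter.Tendsto
      (fun ℓ : ℕ => ∑ i ∈ Finset.range (ℓ - 1), (i : ℝ) / (((ℓ : ℝ) - i) * (i.factorial : ℝ) ^ 2))
      Filter.atTop (nhds 0) := by
  refine ⟨main_bd, ?_⟩
  have hnn : ∀ ℓ : ℕ, (0:ℝ) ≤
      ∑ i ∈ Finset.range (ℓ - 1), (i : ℝ) / (((ℓ : ℝ) - i) * (i.factorial : ℝ) ^ 2) := by
    intro ℓ
    apply Finset.sum_nonneg
    intro i hi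
    simp only [Finset.mem_range] at hi
    have : (i:ℝ) + 1 < (ℓ:ℝ) := by exact_mod_cast (by omega : i + 1 < ℓ)
    have h1 : (0:ℝ) < (ℓ:ℝ) - i := by linarith
    positivity
  have hub : Filter.Tendsto (fun ℓ : ℕ => 3/((ℓ:ℝ)-3) + Real.exp 1 / ℓ)
      Filter.atTop (nhds 0) := by
    have h1 : Filter.Tendsto (fun ℓ : ℕ => (ℓ:ℝ)-3) Filter.atTop Filter.atTop :=
      Filter.tendsto_atTop_add_const_right _ (-3) tendsto_natCast_atTop_atTop
    have ha : Filter.Tendsto (fun ℓ : ℕ => 3/((ℓ:ℝ)-3)) Filter.atTop (nhds 0) :=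
      Filter.Tendsto.div_atTop (tendsto_const_nhds (x := (3:ℝ))) h1
    have hb : Filter.Tendsto (fun ℓ : ℕ => Real.exp 1 / (ℓ:ℝ)) Filter.atTop (nhds 0) :=
      Filter.Tendsto.div_atTop (tendsto_const_nhds (x := Real.exp 1)) tendsto_natCast_atTop_atTop
    simpa using ha.add hb
  apply tendsto_of_tendsto_of_tendsto_of_le_of_le' tendsto_const_nhds hub
  · exact Filter.Eventually.of_forall hnn
  · filter_upwards [Filter.eventually_ge_atTop 4] with ℓ hℓ
    exact main_bd ℓ hℓ
end

section
/- For every even integer n ≥ 12, if G is a triangle-free simple graph on n vertices and x₁x₂ is an edge of G, then the number of cycles of G containing the edge x₁x₂ is at most 2.44·(((n−2)/2)!)². -/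
open SimpleGraph

/-- The number of cycles of `G` (as distinct cycle subgraphs) that contain the edge `xy`. -/
noncomputable def cycleCountThroughEdge {V : Type*} (G : SimpleGraph V) (x y : V) : ℕ :=
  Nat.card {H : G.Subgraph //
    (∃ (u : V) (w : G.Walk u u), w.IsCycle ∧ w.toSubgraph = H) ∧ H.Adj x y}

/-!
A cycle through `x₁x₂` is `x₁ → x₂ ⇝ x₁` for a path `x₂ ⇝ x₁`, and that path is determined by its
list of vertices, which we enumerate depth-first. At a vertex `v` with `a` unused vertices, `c` of
them neighbours of `v`, the next vertex is one of those `c`; as `G` is triangle-free, the next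
vertex has at most `a - c` unused neighbours, and it is not adjacent to `x₁` if `v` is. Hence the
count obeys a recursion in `(a, c)` and `v ∼ x₁`, which `pathBound` dominates because
`c · min (a - c) ⌊a/2⌋` is largest near `c = a/2`. With `a = n - 2 = 2m` this gives at most
`pathSlope (2m + 1) = ∑ k ≤ m, (m!/k!)² < 2.44 (m!)²` cycles.
-/

namespace TriangleFreeCycleCount

/-- `pathSlope (2 * m + 1) = ∑ k ≤ m, (m! / k!) ^ 2`, whose ratio to `(m!) ^ 2` increases to
`I₀(2) ≈ 2.2796`; this is where the constant `2.44` comes from. -/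
def pathSlope : ℕ → ℕ
  | 0 => 1
  | a + 1 => (a + 1) / 2 * pathSlope a + (a + 1) % 2

lemma pathSlope_succ (a : ℕ) : pathSlope (a + 1) = (a + 1) / 2 * pathSlope a + (a + 1) % 2 := rfl

lemma one_le_pathSlope : ∀ a, 1 ≤ pathSlope a
  | 0 => le_rfl
  | a + 1 => by
    rw [pathSlope_succ]
    rcases Nat.mod_two_eq_zero_or_one (a + 1) with h | h
    · have := Nat.mul_pos (show 0 < (a + 1) / 2 by omega) (one_le_pathSlope a)
      omega
    · omega

lemma div_two_le_pathSlope (a : ℕ) : a / 2 ≤ pathSlope a := by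
  cases a with
  | zero => simp
  | succ a => exact (Nat.le_mul_of_pos_right _ (one_le_pathSlope a)).trans (Nat.le_add_right _ _)

lemma pathSlope_two_mul_succ_add_one (m : ℕ) :
    pathSlope (2 * (m + 1) + 1) = (m + 1) ^ 2 * pathSlope (2 * m + 1) + 1 := by
  have h : pathSlope (2 * (m + 1)) = (m + 1) * pathSlope (2 * m + 1) := by
    rw [show 2 * (m + 1) = 2 * m + 1 + 1 by ring, pathSlope_succ,
      show (2 * m + 1 + 1) / 2 = m + 1 by omega, show (2 * m + 1 + 1) % 2 = 0 by omega]
    rfl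
  rw [pathSlope_succ, h, show (2 * (m + 1) + 1) / 2 = m + 1 by omega,
    show (2 * (m + 1) + 1) % 2 = 1 by omega]
  ring

lemma pathSlope_two_mul_add_one_le {m : ℕ} (hm : 3 ≤ m) :
    (pathSlope (2 * m + 1) : ℝ) + 1 ≤ 2.44 * (m.factorial : ℝ) ^ 2 := by
  induction m, hm using Nat.le_induction with
  | base => norm_num [pathSlope, Nat.factorial]
  | succ m hm ih =>
    have h3 : (3 : ℝ) ≤ m := by exact_mod_cast hm
    have hm2 : (2 : ℝ) ≤ ((m : ℝ) + 1) ^ 2 := by nlinarith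
    rw [pathSlope_two_mul_succ_add_one, Nat.factorial_succ]
    push_cast
    calc ((m : ℝ) + 1) ^ 2 * pathSlope (2 * m + 1) + 1 + 1
        ≤ ((m : ℝ) + 1) ^ 2 * (pathSlope (2 * m + 1) + 1) := by nlinarith
      _ ≤ ((m : ℝ) + 1) ^ 2 * (2.44 * (m.factorial : ℝ) ^ 2) := by gcongr
      _ = 2.44 * (((m : ℝ) + 1) * m.factorial) ^ 2 := by ring

lemma mul_min_sub_le (A c : ℕ) : c * min (A - c) (A / 2) ≤ A / 2 * min c ((A + 1) / 2) := by
  rcases le_or_gt c ((A + 1) / 2) with hc | hc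
  · rw [min_eq_right (by omega), min_eq_left hc, Nat.mul_comm]
  · rw [min_eq_right hc.le]
    calc c * min (A - c) (A / 2) ≤ c * (A - c) := Nat.mul_le_mul_left _ (min_le_left _ _)
      _ ≤ A / 2 * ((A + 1) / 2) := by
        rcases le_or_gt c A with hcA | hcA
        · obtain ⟨h, r, hr, rfl⟩ : ∃ h r, r < 2 ∧ A = 2 * h + r :=
            ⟨A / 2, A % 2, by omega, by omega⟩
          rw [show (2 * h + r) / 2 = h by omega, show (2 * h + r + 1) / 2 = h + r by omega] at *
          zify [hcA]
          nlinarith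
        · simp [Nat.sub_eq_zero_of_le hcA.le]

/-- `pathBound s a c` bounds the number of ways to finish a path to the target from a vertex with
`a` unused vertices, `c` of them its neighbours, `s` recording whether it is adjacent to the
target. For `a ≥ 6` it is linear in `min c ⌈a / 2⌉`; the exceptional small values are the exact
optima of the recursion `step_le_pathBound`. -/
def pathBound : Bool → ℕ → ℕ → ℕ
  | true, 3, c => 1 + 2 * min c 1
  | true, 5, c => 1 + 9 * min c 2 + if 3 ≤ c then 6 else 0
  | true, a, c => 1 + (pathSlope a - a % 2) * min c ((a + 1) / 2)
  | false, 2, c => min c 2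
  | false, 4, c => 4 * min c 2 + if 3 ≤ c then 1 else 0
  | false, a, c => pathSlope a * min c ((a + 1) / 2)

lemma pathBound_true_of_six_le {a : ℕ} (ha : 6 ≤ a) (b : ℕ) :
    pathBound true a b = 1 + (pathSlope a - a % 2) * min b ((a + 1) / 2) := by
  rw [pathBound.eq_3] <;> omega

lemma pathBound_false_of_six_le {a : ℕ} (ha : 6 ≤ a) (b : ℕ) :
    pathBound false a b = pathSlope a * min b ((a + 1) / 2) := by
  rw [pathBound.eq_6] <;> omega

lemma pathBound_mono (s : Bool) (a : ℕ) : Monotone (pathBound s a) := by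
  intro b b' h
  cases s
  · rcases (show a = 2 ∨ a = 4 ∨ a ≠ 2 ∧ a ≠ 4 by omega) with rfl | rfl | ⟨h2, h4⟩
    · simp only [pathBound]; omega
    · simp only [pathBound]; split_ifs <;> omega
    · rw [pathBound.eq_6 _ _ h2 h4, pathBound.eq_6 _ _ h2 h4]; gcongr
  · rcases (show a = 3 ∨ a = 5 ∨ a ≠ 3 ∧ a ≠ 5 by omega) with rfl | rfl | ⟨h3, h5⟩
    · simp only [pathBound]; omega
    · simp only [pathBound]; split_ifs <;> omega
    · rw [pathBound.eq_3 _ _ h3 h5, pathBound.eq_3 _ _ h3 h5]; gcongr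

lemma step_le_pathBound_of_lt_seven : ∀ a < 7, ∀ c ≤ a, ∀ s s' : Bool, (s = true → s' = false) →
    (if s then 1 else 0) + c * pathBound s' (a - 1) (a - c) ≤ pathBound s a c := by
  decide

lemma mul_pathBound_true_le {a c : ℕ} (ha : 6 ≤ a) (hc : c ≤ a + 1) :
    c * pathBound true a (a + 1 - c) ≤ pathBound false (a + 1) c := by
  rw [pathBound_true_of_six_le ha, pathBound_false_of_six_le (by omega), pathSlope_succ]
  have hs := div_two_le_pathSlope a
  rcases Nat.even_or_odd' a with ⟨h, rfl | rfl⟩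
  · rw [show 2 * h % 2 = 0 by omega, show (2 * h + 1) / 2 = h by omega,
      show (2 * h + 1) % 2 = 1 by omega, show (2 * h + 1 + 1) / 2 = h + 1 by omega, Nat.sub_zero]
    rcases le_or_gt c (h + 1) with hch | hch
    · rw [min_eq_right (by omega), min_eq_left hch]
      exact le_of_eq (by ring)
    · rw [min_eq_left (by omega), min_eq_right hch.le]
      have hq : c * (2 * h + 1 - c) + 2 ≤ h * (h + 1) := by
        zify [show c ≤ 2 * h + 1 by omega]
        nlinarith
      rw [show 2 * h / 2 = h by omega] at hs
      nlinarith
  · rw [show (2 * h + 1) % 2 = 1 by omega, show (2 * h + 1 + 1) / 2 = h + 1 by omega,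
      show (2 * h + 1 + 1) % 2 = 0 by omega, show (2 * h + 1 + 1 + 1) / 2 = h + 1 by omega]
    have hs1 := one_le_pathSlope (2 * h + 1)
    rcases eq_or_lt_of_le hc with rfl | hc
    · rw [Nat.sub_self, min_eq_left (Nat.zero_le _), min_eq_right (by omega)]
      simp only [mul_zero, add_zero, mul_one]
      nlinarith [Nat.mul_le_mul_left ((h + 1) * (h + 1)) hs1]
    · have hm : 1 ≤ min (2 * h + 1 + 1 - c) (h + 1) := by omega
      have key := mul_min_sub_le (2 * h + 2) c
      rw [show (2 * h + 2) / 2 = h + 1 by omega, show (2 * h + 2 + 1) / 2 = h + 1 by omega,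
        show 2 * h + 2 - c = 2 * h + 1 + 1 - c by omega] at key
      obtain ⟨t, ht⟩ : ∃ t, pathSlope (2 * h + 1) = t + 1 := ⟨_, (Nat.succ_pred_eq_of_pos hs1).symm⟩
      rw [ht, Nat.add_sub_cancel]
      nlinarith [Nat.mul_le_mul_right (t + 1) key, Nat.le_mul_of_pos_right c hm]

lemma step_le_pathBound {s s' : Bool} (hss' : s = true → s' = false) {a c : ℕ} (hc : c ≤ a) :
    (if s then 1 else 0) + c * pathBound s' (a - 1) (a - c) ≤ pathBound s a c := by
  rcases lt_or_ge a 7 with ha | ha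
  · exact step_le_pathBound_of_lt_seven a ha c hc s s' hss'
  obtain ⟨a, rfl⟩ : ∃ a', a = a' + 1 := ⟨a - 1, by omega⟩
  rw [Nat.add_sub_cancel]
  have key := Nat.mul_le_mul_left (pathSlope a) (mul_min_sub_le (a + 1) c)
  cases s <;> cases s'
  · rw [if_neg Bool.false_ne_true, zero_add, pathBound_false_of_six_le (by omega),
      pathBound_false_of_six_le (by omega), pathSlope_succ]
    nlinarith [Nat.zero_le ((a + 1) % 2 * min c ((a + 1 + 1) / 2))]
  · rw [if_neg Bool.false_ne_true, zero_add]
    exact mul_pathBound_true_le (by omega) hc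
  · rw [if_pos rfl, pathBound_false_of_six_le (by omega), pathBound_true_of_six_le (by omega),
      show pathSlope (a + 1) - (a + 1) % 2 = (a + 1) / 2 * pathSlope a by
        rw [pathSlope_succ]; omega]
    nlinarith
  · exact absurd (hss' rfl) (by decide)

lemma pathBound_true_two_mul_self {m : ℕ} (hm : 3 ≤ m) :
    pathBound true (2 * m) (2 * m) = pathSlope (2 * m + 1) := by
  rw [pathBound_true_of_six_le (by omega), pathSlope_succ, show (2 * m + 1) / 2 = m by omega,
    show 2 * m % 2 = 0 by omega, show (2 * m + 1) % 2 = 1 by omega, min_eq_right (by omega),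
    Nat.sub_zero]
  ring



end TriangleFreeCycleCount

namespace SimpleGraph

open Finset TriangleFreeCycleCount

variable {V : Type*} {G : SimpleGraph V}

namespace Walk

lemma IsCycle.exists_isPath_eq_cons {x y : V} {c : G.Walk x x} (hc : c.IsCycle) (hxy : G.Adj x y)
    (hd : ⟨(x, y), hxy⟩ ∈ c.darts) : ∃ q : G.Walk y x, q.IsPath ∧ c = cons hxy q := by
  cases c with
  | nil => simp at hd
  | cons h q =>
    have hq := ((cons_isCycle_iff q h).1 hc).1
    rcases List.mem_cons.1 hd with hd | hd
    · obtain rfl := congrArg (fun d : G.Dart => d.snd) hd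
      exact ⟨q, hq, rfl⟩
    · have hx : x ∈ q.support.dropLast := by
        rw [← map_fst_darts]
        exact List.mem_map_of_mem hd
      have hnodup := hq.support_nodup
      rw [← q.dropLast_support_concat] at hnodup
      exact absurd (List.mem_singleton_self x) (List.disjoint_of_nodup_append hnodup hx)

lemma IsCycle.exists_isPath_toSubgraph_eq [DecidableEq V] {u x y : V} {c : G.Walk u u}
    (hc : c.IsCycle) (hxy : G.Adj x y) (he : s(x, y) ∈ c.edges) :
    ∃ q : G.Walk y x, q.IsPath ∧ (cons hxy q).toSubgraph = c.toSubgraph := by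
  suffices h : ∀ c' : G.Walk u u, c'.IsCycle → c'.toSubgraph = c.toSubgraph →
      ⟨(x, y), hxy⟩ ∈ c'.darts →
      ∃ q : G.Walk y x, q.IsPath ∧ (cons hxy q).toSubgraph = c.toSubgraph by
    obtain ⟨⟨⟨a, b⟩, hab⟩, hd, hde⟩ := List.mem_map.1 he
    rcases Sym2.eq_iff.1 hde with ⟨rfl, rfl⟩ | ⟨rfl, rfl⟩
    · exact h c hc rfl hd
    · refine h c.reverse hc.reverse (toSubgraph_reverse c) ?_
      rw [darts_reverse, List.mem_reverse]
      exact List.mem_map_of_mem hd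
  intro c' hc' hsub hd
  have hx : x ∈ c'.support := dart_fst_mem_support_of_mem_darts _ hd
  obtain ⟨q, hq, hcq⟩ :=
    (hc'.rotate hx).exists_isPath_eq_cons hxy ((rotate_darts c' x hx).mem_iff.2 hd)
  exact ⟨q, hq, by rw [← hcq, toSubgraph_rotate, hsub]⟩

end Walk

variable [DecidableEq V] [DecidableRel G.Adj]

lemma card_filter_adj_add_card_filter_adj_le (htf : G.CliqueFree 3) {u v : V} (huv : G.Adj u v)
    (U : Finset V) : #{w ∈ U | G.Adj u w} + #{w ∈ U | G.Adj v w} ≤ #U := by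
  rw [← card_union_of_disjoint (disjoint_filter.2 fun w _ hu hv =>
    htf {u, v, w} (is3Clique_triple_iff.2 ⟨huv, hu, hv⟩))]
  exact card_le_card (union_subset (filter_subset _ _) (filter_subset _ _))

variable (G) in
/-- Depth-first enumeration of the lists `L` such that `v :: L` is a path to `t` with inner
vertices in `U`; the fuel `k` bounds the depth. -/
def walkTails (t : V) : ℕ → Finset V → V → Finset (List V)
  | 0, _, v => if G.Adj v t then {[t]} else ∅
  | k + 1, U, v => (if G.Adj v t then {[t]} else ∅) ∪
      {u ∈ U | G.Adj v u}.biUnion fun u => (walkTails t k (U.erase u) u).image (u :: ·)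

lemma card_walkTails_succ_le {t v : V} {k B : ℕ} {U : Finset V}
    (hB : ∀ u ∈ {u ∈ U | G.Adj v u}, #(G.walkTails t k (U.erase u) u) ≤ B) :
    #(G.walkTails t (k + 1) U v) ≤ (if G.Adj v t then 1 else 0) + #{u ∈ U | G.Adj v u} * B := by
  rw [walkTails]
  refine (card_union_le _ _).trans (add_le_add ?_ ?_)
  · split_ifs <;> simp
  · exact card_biUnion_le_card_mul _ _ _ fun u hu => card_image_le.trans (hB u hu)

theorem card_walkTails_le (htf : G.CliqueFree 3) (t : V) (k : ℕ) (U : Finset V) (v : V) :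
    #(G.walkTails t k U v) ≤ pathBound (G.Adj v t) #U #{u ∈ U | G.Adj v u} := by
  have hc : #{u ∈ U | G.Adj v u} ≤ #U := card_filter_le _ _
  induction k generalizing U v with
  | zero =>
    rw [walkTails, apply_ite card, card_singleton, card_empty]
    exact le_trans (by simp) (step_le_pathBound (s' := false) (fun _ => rfl) hc)
  | succ k ih =>
    have hchild : ∀ u ∈ {u ∈ U | G.Adj v u}, #(G.walkTails t k (U.erase u) u) ≤
        pathBound (G.Adj u t) (#U - 1) (#U - #{u ∈ U | G.Adj v u}) := by
      intro u hu
      rw [mem_filter] at hu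
      have hnbr : #{w ∈ U.erase u | G.Adj u w} ≤ #U - #{u ∈ U | G.Adj v u} := by
        have := card_le_card (filter_subset_filter (fun w => G.Adj u w) (erase_subset u U))
        have := card_filter_adj_add_card_filter_adj_le htf hu.2.symm U
        omega
      refine (ih _ _ (card_filter_le _ _)).trans ?_
      rw [card_erase_of_mem hu.1]
      exact pathBound_mono _ _ hnbr
    by_cases hvt : G.Adj v t
    · have hfar : ∀ u ∈ {u ∈ U | G.Adj v u}, #(G.walkTails t k (U.erase u) u) ≤
          pathBound false (#U - 1) (#U - #{u ∈ U | G.Adj v u}) := by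
        intro u hu
        have hut : ¬ G.Adj u t := fun hut =>
          htf {v, u, t} (is3Clique_triple_iff.2 ⟨(mem_filter.1 hu).2, hvt, hut⟩)
        simpa [hut] using hchild u hu
      refine (card_walkTails_succ_le hfar).trans ?_
      simpa [hvt] using step_le_pathBound (s := true) (s' := false) (fun _ => rfl) hc
    · have hmax : ∀ u ∈ {u ∈ U | G.Adj v u}, #(G.walkTails t k (U.erase u) u) ≤
          max (pathBound false (#U - 1) (#U - #{u ∈ U | G.Adj v u}))
            (pathBound true (#U - 1) (#U - #{u ∈ U | G.Adj v u})) := by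
        intro u hu
        refine (hchild u hu).trans ?_
        cases decide (G.Adj u t)
        exacts [le_max_left _ _, le_max_right _ _]
      refine (card_walkTails_succ_le hmax).trans ?_
      simp only [hvt, if_false, decide_false, zero_add, mul_max]
      exact max_le (by simpa using step_le_pathBound (s := false) (s' := false) (fun _ => rfl) hc)
        (by simpa using step_le_pathBound (s := false) (s' := true) nofun hc)

lemma Walk.support_tail_mem_walkTails {t v : V} (p : G.Walk v t) (hp : p.IsPath) (hvt : v ≠ t)
    {k : ℕ} {U : Finset V} (hk : p.length ≤ k + 1) (hU : ∀ x ∈ p.support.tail, x ≠ t → x ∈ U) :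
    p.support.tail ∈ G.walkTails t k U v := by
  induction p generalizing k U with
  | nil => exact absurd rfl hvt
  | @cons v u t h q ih =>
    rw [Walk.support_cons, List.tail_cons] at hU ⊢
    rw [Walk.cons_isPath_iff] at hp
    by_cases hut : u = t
    · subst hut
      obtain rfl : q = Walk.nil := (Walk.isPath_iff_nil.1 hp.1).eq_nil
      cases k <;> simp [walkTails, h]
    · obtain ⟨k, rfl⟩ : ∃ k', k = k' + 1 := ⟨k - 1, by
        have : q.length ≠ 0 := fun h0 => hut (q.eq_of_length_eq_zero h0)
        simp only [Walk.length_cons] at hk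
        omega⟩
      have hnodup := hp.1.support_nodup
      rw [← q.cons_tail_support, List.nodup_cons] at hnodup
      rw [← q.cons_tail_support, walkTails]
      refine mem_union_right _ (mem_biUnion.2 ⟨u, mem_filter.2 ⟨hU u q.start_mem_support hut, h⟩,
        mem_image_of_mem _ (ih hp.1 hut (by simpa using hk) fun x hx hxt => ?_)⟩)
      exact mem_erase.2 ⟨fun hxu => hnodup.1 (hxu ▸ hx), hU x (List.mem_of_mem_tail hx) hxt⟩

theorem cycleCountThroughEdge_le_card_walkTails [Fintype V] {x y : V} (hxy : G.Adj x y) :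
    cycleCountThroughEdge G x y ≤ #(G.walkTails x (Fintype.card V) (univ \ {x, y}) y) := by
  have hpath : ∀ H : {H : G.Subgraph //
      (∃ (u : V) (w : G.Walk u u), w.IsCycle ∧ w.toSubgraph = H) ∧ H.Adj x y},
      ∃ q : G.Walk y x, q.IsPath ∧ (Walk.cons hxy q).toSubgraph = H := by
    rintro ⟨H, ⟨u, c, hc, rfl⟩, hH⟩
    exact hc.exists_isPath_toSubgraph_eq hxy ((Walk.mem_edges_toSubgraph c).1 hH)
  choose q hq hqH using hpath
  have hmem : ∀ H, (q H).support.tail ∈ G.walkTails x (Fintype.card V) (univ \ {x, y}) y := by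
    intro H
    refine (q H).support_tail_mem_walkTails (hq H) hxy.ne.symm
      (by have := (hq H).length_lt; omega) fun z hz hzx => ?_
    have hnodup := (hq H).support_nodup
    rw [← (q H).cons_tail_support, List.nodup_cons] at hnodup
    simp only [mem_sdiff, mem_univ, mem_insert, mem_singleton, true_and]
    rintro (rfl | rfl)
    exacts [hzx rfl, hnodup.1 hz]
  have hinj : Function.Injective fun H => (⟨(q H).support.tail, hmem H⟩ :
      {L // L ∈ G.walkTails x (Fintype.card V) (univ \ {x, y}) y}) := by
    intro H₁ H₂ h
    have hq₁₂ : q H₁ = q H₂ := by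
      apply Walk.ext_support
      rw [← (q H₁).cons_tail_support, ← (q H₂).cons_tail_support]
      exact congrArg (y :: ·) (congrArg Subtype.val h)
    exact Subtype.ext ((hqH H₁).symm.trans (hq₁₂ ▸ hqH H₂))
  exact (Nat.card_le_card_of_injective _ hinj).trans (Nat.card_eq_finsetCard _).le

theorem cycleCountThroughEdge_le_pathSlope [Fintype V] (htf : G.CliqueFree 3) {x y : V}
    (hxy : G.Adj x y) {m : ℕ} (hm : 3 ≤ m) (hcard : Fintype.card V = 2 * m + 2) :
    cycleCountThroughEdge G x y ≤ pathSlope (2 * m + 1) := by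
  have hU : #(univ \ {x, y} : Finset V) = 2 * m := by
    rw [card_sdiff_of_subset (subset_univ _), card_pair hxy.ne, card_univ, hcard]
    rfl
  have h := card_walkTails_le htf x (Fintype.card V) (univ \ {x, y}) y
  rw [decide_eq_true hxy.symm, hU] at h
  refine (cycleCountThroughEdge_le_card_walkTails hxy).trans (h.trans ?_)
  rw [← pathBound_true_two_mul_self hm]
  exact pathBound_mono _ _ ((card_filter_le _ _).trans hU.le)

end SimpleGraph

theorem stmt_17 (n : ℕ) (hne : Even n) (hn : 12 ≤ n) {V : Type} [Fintype V]
    (G : SimpleGraph V) (hcard : Fintype.card V = n)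
    (htf : G.CliqueFree 3) (x₁ x₂ : V) (hadj : G.Adj x₁ x₂) :
    (cycleCountThroughEdge G x₁ x₂ : ℝ) ≤ 2.44 * (((n - 2) / 2).factorial : ℝ) ^ 2 := by
  classical
  obtain ⟨m, rfl⟩ : ∃ m, n = 2 * m + 2 := ⟨n / 2 - 1, by obtain ⟨r, rfl⟩ := hne; omega⟩
  rw [show (2 * m + 2 - 2) / 2 = m by omega]
  have hcount := cycleCountThroughEdge_le_pathSlope htf hadj (by omega) hcard
  have hslope := TriangleFreeCycleCount.pathSlope_two_mul_add_one_le (m := m) (by omega)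
  have : (cycleCountThroughEdge G x₁ x₂ : ℝ) ≤ TriangleFreeCycleCount.pathSlope (2 * m + 1) := by
    exact_mod_cast hcount
  linarith
end

section
/- Every triangle-free simple graph H on m vertices has at most e²·(1 + m/(2e))^m cycles in total. -/
open SimpleGraph

/-- The number of cycles in a simple graph `G`, i.e. the number of distinct
subgraphs of `G` that are cycles. -/
noncomputable def cycleCount {V : Type*} (G : SimpleGraph V) : ℕ :=
  Nat.card {H : G.Subgraph // ∃ (u : V) (w : G.Walk u u), w.IsCycle ∧ w.toSubgraph = H}

open Finset Nat

/-!
Group the cycles by their vertex set `S`, with `k = |S|`. Rotating a cycle so that it starts at a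
fixed `a ∈ S` and listing its remaining vertices maps the cycles on `S` injectively to the
Hamiltonian paths of `H[S]` ending at `a`. Grow such a path from `a` backwards. If `x` is its
current first vertex and `s` vertices of `S` are still unused, the next two vertices `z ~ y`
satisfy `y ~ x` and, as `H` has no triangle, `z ≁ x`. So `(z, y)` lies in a product of two
disjoint sets of unused vertices, which leaves at most `⌊s²/4⌋` choices. Multiplying these
bounds gives at most `⌊(k-1)/2⌋! ⌊k/2⌋!` cycles on `S`. The Stirling-type bound
`n! ≤ e √n (n/e)^n` turns this into `e² (k/(2e))^k ≤ e² (m/(2e))^k`, and the binomial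
theorem sums these over all `S`.
-/

lemma mul_le_add_sq_div_four (a b : ℕ) : a * b ≤ (a + b) ^ 2 / 4 := by
  rw [Nat.le_div_iff_mul_le (by norm_num)]
  nlinarith [sq_nonneg ((a : ℤ) - b)]

lemma div_two_mul_succ_div_two (n : ℕ) : n / 2 * ((n + 1) / 2) = n ^ 2 / 4 := by
  obtain ⟨t, rfl | rfl⟩ := Nat.even_or_odd' n
  · rw [show 2 * t / 2 = t by omega, show (2 * t + 1) / 2 = t by omega,
      show (2 * t) ^ 2 = 4 * (t * t) by ring]
    omega
  · rw [show (2 * t + 1) / 2 = t by omega, show (2 * t + 1 + 1) / 2 = t + 1 by omega,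
      show (2 * t + 1) ^ 2 = 4 * (t * (t + 1)) + 1 by ring]
    omega

section Factorials
open Real

lemma factorial_le_exp_one_mul_sqrt_mul_pow {n : ℕ} (hn : n ≠ 0) :
    (n ! : ℝ) ≤ exp 1 * √n * (n / exp 1) ^ n := by
  have hn' : (0 : ℝ) < n := by exact_mod_cast Nat.pos_of_ne_zero hn
  -- `stirlingSeq n = n! / (√(2n) (n/e)^n)` decreases from its value `e / √2` at `n = 1`
  have h : Stirling.stirlingSeq n ≤ exp 1 / √2 := by
    obtain ⟨k, rfl⟩ := Nat.exists_eq_succ_of_ne_zero hn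
    simpa using Stirling.stirlingSeq'_antitone (Nat.zero_le k)
  rw [Stirling.stirlingSeq, div_le_iff₀ (by positivity), sqrt_mul zero_le_two] at h
  calc (n ! : ℝ) ≤ exp 1 / √2 * (√2 * √n * (n / exp 1) ^ n) := h
    _ = _ := by field_simp

lemma factorial_sq_le {n : ℕ} (hn : n ≠ 0) :
    (n ! : ℝ) ^ 2 ≤ exp 1 ^ 2 * n * (n / exp 1) ^ (2 * n) := by
  calc (n ! : ℝ) ^ 2 ≤ (exp 1 * √n * (n / exp 1) ^ n) ^ 2 := by
        gcongr; exact factorial_le_exp_one_mul_sqrt_mul_pow hn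
    _ = _ := by rw [mul_pow, mul_pow, sq_sqrt (Nat.cast_nonneg n), ← pow_mul, mul_comm n]

lemma exp_one_le_one_add_inv_pow {n : ℕ} (hn : n ≠ 0) :
    exp 1 ≤ (1 + (n : ℝ)⁻¹) ^ (n + 1) := by
  have hn' : (0 : ℝ) < n := by exact_mod_cast Nat.pos_of_ne_zero hn
  have hx : 0 < 1 + (n : ℝ)⁻¹ := by positivity
  have hlog : ((n : ℝ) + 1)⁻¹ ≤ log (1 + (n : ℝ)⁻¹) := by
    convert one_sub_inv_le_log_of_pos hx using 1
    field_simp; ring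
  rw [← exp_log (pow_pos hx _), exp_le_exp, Real.log_pow]
  calc (1 : ℝ) = (n + 1 : ℕ) * ((n : ℝ) + 1)⁻¹ := by push_cast; field_simp
    _ ≤ _ := by gcongr

lemma factorial_mul_factorial_succ_le (t : ℕ) :
    (t ! * (t + 1)! : ℝ) ≤ exp 1 ^ 2 * ((t + 1) / exp 1) ^ (2 * (t + 1)) := by
  have ht : (0 : ℝ) < t + 1 := by positivity
  refine le_of_mul_le_mul_left ?_ ht
  calc ((t : ℝ) + 1) * (t ! * (t + 1)! : ℝ) = ((t + 1)! : ℝ) ^ 2 := by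
        push_cast [Nat.factorial_succ]; ring
    _ ≤ exp 1 ^ 2 * (t + 1 : ℕ) * ((t + 1 : ℕ) / exp 1) ^ (2 * (t + 1)) :=
      factorial_sq_le (Nat.succ_ne_zero t)
    _ = _ := by push_cast; ring

lemma factorial_sq_le_odd {t : ℕ} (ht : t ≠ 0) :
    (t ! : ℝ) ^ 2 ≤ exp 1 ^ 2 * ((2 * t + 1) / (2 * exp 1)) ^ (2 * t + 1) := by
  have hbase :
      (2 * t + 1 : ℝ) / (2 * exp 1) = (1 + ((2 * t : ℕ) : ℝ)⁻¹) * (t / exp 1) := by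
    have ht' : (0 : ℝ) < t := by exact_mod_cast Nat.pos_of_ne_zero ht
    push_cast; field_simp
  calc (t ! : ℝ) ^ 2 ≤ exp 1 ^ 2 * t * (t / exp 1) ^ (2 * t) := factorial_sq_le ht
    _ = exp 1 ^ 2 * (exp 1 * (t / exp 1) ^ (2 * t + 1)) := by
      rw [pow_succ _ (2 * t)]; field_simp
    _ ≤ exp 1 ^ 2 *
        ((1 + ((2 * t : ℕ) : ℝ)⁻¹) ^ (2 * t + 1) * (t / exp 1) ^ (2 * t + 1)) := by
      gcongr; exact exp_one_le_one_add_inv_pow (by omega)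
    _ = _ := by rw [hbase, mul_pow]

lemma factorial_pred_div_two_mul_factorial_div_two_le (k : ℕ) :
    ((((k - 1) / 2)! * (k / 2)! : ℕ) : ℝ) ≤ exp 1 ^ 2 * (k / (2 * exp 1)) ^ k := by
  have he : 2 ≤ exp 1 := by linarith [add_one_le_exp (1 : ℝ)]
  obtain ⟨t, rfl | rfl⟩ := Nat.even_or_odd' k
  · rcases t with _ | t
    · simp
    · rw [show (2 * (t + 1) - 1) / 2 = t by omega, show 2 * (t + 1) / 2 = t + 1 by omega]
      convert factorial_mul_factorial_succ_le t using 3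
      · push_cast; ring
      · push_cast; field_simp
  · rw [show (2 * t + 1 - 1) / 2 = t by omega, show (2 * t + 1) / 2 = t by omega]
    rcases Nat.eq_zero_or_pos t with rfl | ht
    · have : exp 1 ^ 2 * (((2 * 0 + 1 : ℕ) : ℝ) / (2 * exp 1)) ^ (2 * 0 + 1) = exp 1 / 2 := by
        push_cast; field_simp
      rw [this]; simp; linarith
    · push_cast; rw [← sq]; exact factorial_sq_le_odd ht.ne'

end Factorials

section PathLists
variable {V : Type*} [DecidableEq V] (H : SimpleGraph V) [DecidableRel H.Adj]

/-- The paths `v₁ ~ v₂ ~ ⋯ ~ vⱼ = a` of `H` on `j` distinct vertices of `S`, as lists. -/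
noncomputable def pathListsEndingAt (S : Finset V) (j : ℕ) (a : V) : Finset (List V) :=
  {l ∈ (S.powersetCard j).biUnion fun T => T.toList.permutations.toFinset |
    l.IsChain H.Adj ∧ l.getLast? = some a}

variable {H} {S : Finset V} {j : ℕ} {a : V} {l : List V}

lemma mem_pathListsEndingAt : l ∈ pathListsEndingAt H S j a ↔
    l.Nodup ∧ l.length = j ∧ l.toFinset ⊆ S ∧ l.IsChain H.Adj ∧ l.getLast? = some a := by
  simp only [pathListsEndingAt, mem_filter, mem_biUnion, mem_powersetCard, List.mem_toFinset,
    List.mem_permutations]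
  constructor
  · rintro ⟨⟨T, ⟨hTS, hTcard⟩, hperm⟩, hchain, hlast⟩
    have hl : l.toFinset = T := by ext x; simp [hperm.mem_iff]
    exact ⟨hperm.nodup_iff.mpr T.nodup_toList, by rw [hperm.length_eq, length_toList, hTcard],
      hl ▸ hTS, hchain, hlast⟩
  · rintro ⟨hnodup, hlen, hsub, hchain, hlast⟩
    exact ⟨⟨l.toFinset, ⟨hsub, by rw [List.toFinset_card_of_nodup hnodup, hlen]⟩,
      (List.toFinset_toList hnodup).symm⟩, hchain, hlast⟩

lemma card_sdiff_toFinset_of_mem_pathListsEndingAt (hl : l ∈ pathListsEndingAt H S j a) :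
    #(S \ l.toFinset) = #S - j := by
  obtain ⟨hnodup, hlen, hsub, -⟩ := mem_pathListsEndingAt.mp hl
  rw [card_sdiff_of_subset hsub, List.toFinset_card_of_nodup hnodup, hlen]

lemma mem_pathListsEndingAt_of_cons_mem {y : V} (hj : j ≠ 0)
    (h : y :: l ∈ pathListsEndingAt H S (j + 1) a) :
    l ∈ pathListsEndingAt H S j a ∧ y ∈ S \ l.toFinset := by
  obtain ⟨hnodup, hlen, hsub, hchain, hlast⟩ := mem_pathListsEndingAt.mp h
  have hne : l ≠ [] := by rintro rfl; simp at hlen; omega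
  refine ⟨mem_pathListsEndingAt.mpr ⟨(List.nodup_cons.mp hnodup).2, by simpa using hlen,
    fun x hx => hsub (by simp [List.mem_toFinset.mp hx]), hchain.tail, ?_⟩, ?_⟩
  · obtain ⟨b, l, rfl⟩ := List.exists_cons_of_ne_nil hne
    rwa [List.getLast?_cons_cons] at hlast
  · simp only [mem_sdiff, List.mem_toFinset]
    exact ⟨hsub (by simp), (List.nodup_cons.mp hnodup).1⟩

lemma card_pathListsEndingAt_zero : #(pathListsEndingAt H S 0 a) = 0 := by
  refine card_eq_zero.mpr (eq_empty_of_forall_notMem fun l hl => ?_)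
  obtain ⟨-, hlen, -, -, hlast⟩ := mem_pathListsEndingAt.mp hl
  simp [List.length_eq_zero_iff.mp hlen] at hlast

lemma card_pathListsEndingAt_one_le : #(pathListsEndingAt H S 1 a) ≤ 1 := by
  refine card_le_one.mpr fun l hl l' hl' => ?_
  obtain ⟨-, hlen, -, -, hlast⟩ := mem_pathListsEndingAt.mp hl
  obtain ⟨-, hlen', -, -, hlast'⟩ := mem_pathListsEndingAt.mp hl'
  obtain ⟨b, rfl⟩ := List.length_eq_one_iff.mp hlen
  obtain ⟨c, rfl⟩ := List.length_eq_one_iff.mp hlen'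
  simp_all

lemma card_pathListsEndingAt_succ_le (hj : j ≠ 0) :
    #(pathListsEndingAt H S (j + 1) a) ≤ (#S - j) * #(pathListsEndingAt H S j a) := by
  refine card_le_mul_card_image_of_maps_to (f := List.tail) ?_ _ fun l hl => ?_
  · rintro (_ | ⟨y, l⟩) h
    · simp [mem_pathListsEndingAt] at h
    · exact (mem_pathListsEndingAt_of_cons_mem hj h).1
  rw [← card_sdiff_toFinset_of_mem_pathListsEndingAt hl]
  refine (card_le_card fun l' hl' => ?_).trans (card_image_le (f := (· :: l)))
  rw [mem_filter] at hl'
  obtain ⟨hl', rfl⟩ := hl'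
  obtain (_ | ⟨y, l⟩) := l'
  · simp [mem_pathListsEndingAt] at hl'
  · exact mem_image.mpr ⟨y, (mem_pathListsEndingAt_of_cons_mem hj hl').2, rfl⟩

lemma mem_nonNeighbors_and_mem_neighbors_of_cons_cons_mem (htf : H.CliqueFree 3) (hj : j ≠ 0)
    {x y z : V} (h : z :: y :: x :: l ∈ pathListsEndingAt H S (j + 2) a) :
    z ∈ {b ∈ S \ (x :: l).toFinset | ¬H.Adj x b} ∧
      y ∈ {b ∈ S \ (x :: l).toFinset | H.Adj x b} := by
  obtain ⟨hyl, hz⟩ := mem_pathListsEndingAt_of_cons_mem (by omega) h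
  obtain ⟨-, hy⟩ := mem_pathListsEndingAt_of_cons_mem hj hyl
  obtain ⟨-, -, -, hchain, -⟩ := mem_pathListsEndingAt.mp h
  obtain ⟨hzy, hchain⟩ := List.isChain_cons_cons.mp hchain
  have hyx : H.Adj y x := (List.isChain_cons_cons.mp hchain).1
  have hxz : ¬H.Adj x z := fun hxz =>
    htf {x, y, z} (is3Clique_triple_iff.mpr ⟨hyx.symm, hxz, hzy.symm⟩)
  simp only [mem_filter, mem_sdiff, List.mem_toFinset, List.mem_cons] at hz hy ⊢
  exact ⟨⟨⟨hz.1, by tauto⟩, hxz⟩, hy, hyx.symm⟩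

lemma card_pathListsEndingAt_add_two_le (htf : H.CliqueFree 3) (hj : j ≠ 0) :
    #(pathListsEndingAt H S (j + 2) a) ≤ (#S - j) ^ 2 / 4 * #(pathListsEndingAt H S j a) := by
  refine card_le_mul_card_image_of_maps_to (f := List.drop 2) ?_ _ fun l hl => ?_
  · rintro (_ | ⟨z, _ | ⟨y, l⟩⟩) h
    · simp [mem_pathListsEndingAt] at h
    · simp [mem_pathListsEndingAt] at h
    · exact (mem_pathListsEndingAt_of_cons_mem hj
        (mem_pathListsEndingAt_of_cons_mem (by omega) h).1).1
  obtain (_ | ⟨x, l₀⟩) := l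
  · simp [mem_pathListsEndingAt] at hl
  set R := S \ (x :: l₀).toFinset
  calc #{l ∈ pathListsEndingAt H S (j + 2) a | l.drop 2 = x :: l₀}
      ≤ #(({b ∈ R | ¬H.Adj x b} ×ˢ {b ∈ R | H.Adj x b}).image
          fun p => p.1 :: p.2 :: x :: l₀) := by
        refine card_le_card fun l' hl' => ?_
        rw [mem_filter] at hl'
        obtain ⟨hl', hdrop⟩ := hl'
        obtain (_ | ⟨z, _ | ⟨y, l⟩⟩) := l'
        · simp [mem_pathListsEndingAt] at hl'
        · simp [mem_pathListsEndingAt] at hl'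
        obtain rfl : l = x :: l₀ := hdrop
        exact mem_image.mpr ⟨(z, y), mem_product.mpr
          (mem_nonNeighbors_and_mem_neighbors_of_cons_cons_mem htf hj hl'), rfl⟩
    _ ≤ #{b ∈ R | ¬H.Adj x b} * #{b ∈ R | H.Adj x b} :=
        card_image_le.trans (card_product _ _).le
    _ ≤ (#S - j) ^ 2 / 4 := by
        rw [← card_sdiff_toFinset_of_mem_pathListsEndingAt hl,
          ← card_filter_add_card_filter_not (s := R) (H.Adj x), add_comm]
        exact mul_le_add_sq_div_four _ _

lemma card_pathListsEndingAt_add_le (htf : H.CliqueFree 3) (hj : j ≠ 0) {r : ℕ}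
    (hr : j + r = #S) :
    #(pathListsEndingAt H S (j + r) a) ≤
      (r / 2)! * ((r + 1) / 2)! * #(pathListsEndingAt H S j a) := by
  induction r using Nat.twoStepInduction generalizing j with
  | zero => simp
  | one =>
    simpa [show #S - j = 1 by omega] using
      card_pathListsEndingAt_succ_le (H := H) (S := S) (a := a) hj
  | more r ih _ =>
    have hfac : ((r + 2) / 2)! * ((r + 2 + 1) / 2)! =
        (r + 2) ^ 2 / 4 * ((r / 2)! * ((r + 1) / 2)!) := by
      rw [← div_two_mul_succ_div_two, show (r + 2) / 2 = r / 2 + 1 by omega,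
        show (r + 2 + 1) / 2 = (r + 1) / 2 + 1 by omega, factorial_succ, factorial_succ]
      ring
    calc #(pathListsEndingAt H S (j + (r + 2)) a)
        = #(pathListsEndingAt H S (j + 2 + r) a) := by rw [add_right_comm, add_assoc]
      _ ≤ (r / 2)! * ((r + 1) / 2)! * #(pathListsEndingAt H S (j + 2) a) :=
        ih (by omega) (by omega)
      _ ≤ (r / 2)! * ((r + 1) / 2)! * ((#S - j) ^ 2 / 4 * #(pathListsEndingAt H S j a)) := by
        gcongr; exact card_pathListsEndingAt_add_two_le htf hj
      _ = _ := by rw [show #S - j = r + 2 by omega, hfac]; ring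

lemma card_pathListsEndingAt_card_le (htf : H.CliqueFree 3) (S : Finset V) (a : V) :
    #(pathListsEndingAt H S #S a) ≤ ((#S - 1) / 2)! * (#S / 2)! := by
  rcases Nat.eq_zero_or_pos #S with hS | hS
  · rw [hS, card_pathListsEndingAt_zero]
    exact Nat.zero_le _
  · have h := card_pathListsEndingAt_add_le htf one_ne_zero (show 1 + (#S - 1) = #S by omega)
      (H := H) (a := a)
    rw [show 1 + (#S - 1) = #S by omega, show #S - 1 + 1 = #S by omega] at h
    exact h.trans (mul_le_of_le_one_right' card_pathListsEndingAt_one_le)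

end PathLists

section Cycles
variable {V : Type*} {H : SimpleGraph V}

def IsCycleSubgraph (x : H.Subgraph) : Prop :=
  ∃ (u : V) (w : H.Walk u u), w.IsCycle ∧ w.toSubgraph = x

lemma IsCycleSubgraph.exists_isCycle_walk [DecidableEq V] {x : H.Subgraph}
    (hx : IsCycleSubgraph x) {a : V} (ha : a ∈ x.verts) :
    ∃ w : H.Walk a a, w.IsCycle ∧ w.toSubgraph = x := by
  obtain ⟨u, w, hw, rfl⟩ := hx
  have ha' : a ∈ w.support := by simpa using ha
  exact ⟨w.rotate a ha', hw.rotate ha', w.toSubgraph_rotate ha'⟩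

lemma SimpleGraph.Walk.IsCycle.support_tail_mem_pathListsEndingAt [DecidableEq V]
    [DecidableRel H.Adj] {a : V} {w : H.Walk a a} (hw : w.IsCycle) :
    w.support.tail ∈ pathListsEndingAt H w.support.toFinset #w.support.toFinset a := by
  have hne : w.support.tail ≠ [] := List.ne_nil_of_mem (w.end_mem_tail_support hw.not_nil)
  have htail : w.support.tail.toFinset = w.support.toFinset := by
    conv_rhs => rw [← w.cons_tail_support]
    rw [List.toFinset_cons,
      insert_eq_of_mem (List.mem_toFinset.mpr (w.end_mem_tail_support hw.not_nil))]
  refine mem_pathListsEndingAt.mpr ⟨hw.support_nodup, ?_, htail.subset,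
    w.isChain_adj_support.tail, ?_⟩
  · rw [← htail, List.toFinset_card_of_nodup hw.support_nodup]
  · rw [List.getLast?_eq_some_getLast hne, List.getLast_tail, w.getLast_support]

lemma card_le_card_pathListsEndingAt [DecidableEq V] [DecidableRel H.Adj]
    {T : Finset H.Subgraph} {S : Finset V} (hT : ∀ x ∈ T, IsCycleSubgraph x ∧ x.verts = S)
    {a : V} (ha : a ∈ S) :
    #T ≤ #(pathListsEndingAt H S #S a) := by
  have hwalk : ∀ x ∈ T, ∃ w : H.Walk a a, w.IsCycle ∧ w.toSubgraph = x := fun x hx =>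
    (hT x hx).1.exists_isCycle_walk (by rw [(hT x hx).2]; exact ha)
  choose! w hw using hwalk
  have hS : ∀ x ∈ T, (w x).support.toFinset = S := fun x hx => by
    have h := Walk.verts_toSubgraph (w x)
    rw [(hw x hx).2, (hT x hx).2] at h
    ext v
    simpa using (Set.ext_iff.mp h v).symm
  refine card_le_card_of_injOn (fun x => (w x).support.tail) (fun x hx => ?_)
    fun x hx y hy hxy => ?_
  · simpa [hS x hx] using (hw x hx).1.support_tail_mem_pathListsEndingAt
  · have : w x = w y := Walk.ext_support (by
      rw [← (w x).cons_tail_support, ← (w y).cons_tail_support]; exact congrArg (a :: ·) hxy)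
    rw [← (hw x hx).2, ← (hw y hy).2, this]

lemma cycleCount_le_sum_factorial_mul_factorial [Fintype V] (htf : H.CliqueFree 3) :
    cycleCount H ≤ ∑ S : Finset V, ((#S - 1) / 2)! * (#S / 2)! := by
  classical
  have hC : cycleCount H = #{x : H.Subgraph | IsCycleSubgraph x} := by
    rw [← Fintype.card_subtype, ← Nat.card_eq_fintype_card]; rfl
  rw [hC, card_eq_sum_card_fiberwise (f := fun x => x.verts.toFinset) (t := univ)
    fun _ _ => mem_coe.mpr (mem_univ _)]
  refine sum_le_sum fun S _ => ?_
  obtain rfl | ⟨a, ha⟩ := S.eq_empty_or_nonempty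
  · refine (card_eq_zero.mpr (filter_eq_empty_iff.mpr fun x hx hS => ?_)).trans_le
      (Nat.zero_le _)
    obtain ⟨u, w, -, rfl⟩ := (mem_filter.mp hx).2
    have hu := Set.mem_toFinset.mpr w.start_mem_verts_toSubgraph
    rw [hS] at hu
    exact notMem_empty _ hu
  · refine (card_le_card_pathListsEndingAt (fun x hx => ?_) ha).trans
      (card_pathListsEndingAt_card_le htf S a)
    obtain ⟨hxC, hxS⟩ := mem_filter.mp hx
    exact ⟨(mem_filter.mp hxC).2, by simp [← hxS]⟩

end Cycles

theorem stmt_19 (m : ℕ) {V : Type} [Fintype V] (H : SimpleGraph V)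
    (hcard : Fintype.card V = m) (htf : H.CliqueFree 3) :
    (cycleCount H : ℝ) ≤ Real.exp 1 ^ 2 * (1 + (m : ℝ) / (2 * Real.exp 1)) ^ m := by
  calc (cycleCount H : ℝ) ≤ ∑ S : Finset V, ((((#S - 1) / 2)! * (#S / 2)! : ℕ) : ℝ) := by
        exact_mod_cast cycleCount_le_sum_factorial_mul_factorial htf
    _ ≤ ∑ S : Finset V, Real.exp 1 ^ 2 * (#S / (2 * Real.exp 1)) ^ #S :=
        sum_le_sum fun S _ => factorial_pred_div_two_mul_factorial_div_two_le #S
    _ ≤ ∑ S : Finset V, Real.exp 1 ^ 2 * (m / (2 * Real.exp 1)) ^ #S := by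
        gcongr with S; rw [← hcard]; exact_mod_cast card_le_univ S
    _ = _ := by
        rw [← mul_sum, ← hcard, add_comm, ← Fintype.sum_pow_mul_eq_add_pow]
        simp
end
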